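/- Let φ(t) = 1/ϕ(Φ⁻¹(t)) for t ∈ (0,1), where ϕ is the standard normal density and Φ the standard normal CDF. Then ψ(t) := ∫₀¹ (min(t,s) − ts)φ(s)ds = ϕ(Φ⁻¹(t)), and q := ∫₀¹ ψ(t)φ(t)dt = 1. -/

import Mathlib

/-! Substituting `s = Φ x` turns `ψ (Φ y)` into `∫ x, min (Φ y) (Φ x) - Φ y * Φ x`, which splits at
`y` into `(1 - Φ y) * (∫ x in Iic y, Φ x) + Φ y * ∫ x in Ioi y, (1 - Φ x)`. Since
`(x (1 - Φ(x)) - ϕ(x))' = 1 - Φ(x)` and the Mills-ratio bound `x (1 - Φ(x)) ≤ ϕ(x)` kills the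
boundary term at `+∞`, the right tail is `ϕ(y) - y (1 - Φ(y))`; the reflection
`Φ(-x) = 1 - Φ(x)` turns this into `y Φ(y) + ϕ(y)` for the left tail, and the combination collapses
to `ϕ(y)`. Then `q = 1` because `ψ φ ≡ 1`. -/

open Real MeasureTheory Set Filter Topology

lemma integrableOn_Iic_comp_neg {E : Type*} [NormedAddCommGroup E] {f : ℝ → E} {c : ℝ}
    (hf : IntegrableOn f (Ioi (-c))) : IntegrableOn (fun x => f (-x)) (Iic c) := by
  have hmp := (Measure.measurePreserving_neg (volume : Measure ℝ)).integrableOn_comp_preimage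
    (Homeomorph.neg ℝ).measurableEmbedding (f := f) (s := Ici (-c))
  simp only [neg_preimage, neg_Ici, neg_neg] at hmp
  exact hmp.2 ((integrableOn_Ici_iff_integrableOn_Ioi).2 hf)

lemma integral_min_sub_mul_eq_of_monotone {F : ℝ → ℝ} (hF : Monotone F) {y : ℝ}
    (hIic : IntegrableOn F (Iic y)) (hIoi : IntegrableOn (fun x => 1 - F x) (Ioi y)) :
    ∫ x, (min (F y) (F x) - F y * F x) =
      (1 - F y) * (∫ x in Iic y, F x) + F y * ∫ x in Ioi y, (1 - F x) := by
  have hIic_eq : EqOn (fun x => min (F y) (F x) - F y * F x) (fun x => (1 - F y) * F x) (Iic y) :=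
    fun x hx => by simp only [min_eq_right (hF hx)]; ring
  have hIoi_eq : EqOn (fun x => min (F y) (F x) - F y * F x) (fun x => F y * (1 - F x)) (Ioi y) :=
    fun x hx => by simp only [min_eq_left (hF hx.out.le)]; ring
  rw [← intervalIntegral.integral_Iic_add_Ioi
      (IntegrableOn.congr_fun (hIic.const_mul _) hIic_eq.symm measurableSet_Iic)
      (IntegrableOn.congr_fun (hIoi.const_mul _) hIoi_eq.symm measurableSet_Ioi),
    setIntegral_congr_fun measurableSet_Iic hIic_eq, setIntegral_congr_fun measurableSet_Ioi hIoi_eq,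
    integral_const_mul, integral_const_mul]

namespace StdNormal

noncomputable def pdf (x : ℝ) : ℝ := 1 / √(2 * π) * exp (-x ^ 2 / 2)

noncomputable def cdf (x : ℝ) : ℝ := ∫ t in Iic x, pdf t

lemma pdf_eq_gaussianPDFReal : pdf = ProbabilityTheory.gaussianPDFReal 0 1 := by
  ext x
  simp [pdf, ProbabilityTheory.gaussianPDFReal]

lemma pdf_pos (x : ℝ) : 0 < pdf x := by
  unfold pdf; positivity

lemma pdf_neg (x : ℝ) : pdf (-x) = pdf x := by
  simp [pdf]

lemma continuous_pdf : Continuous pdf := by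
  unfold pdf; fun_prop

lemma integrable_pdf : Integrable pdf := by
  rw [pdf_eq_gaussianPDFReal]; exact ProbabilityTheory.integrable_gaussianPDFReal 0 1

lemma integral_pdf : ∫ x, pdf x = 1 := by
  rw [pdf_eq_gaussianPDFReal]; exact ProbabilityTheory.integral_gaussianPDFReal_eq_one 0 one_ne_zero

lemma hasDerivAt_pdf (x : ℝ) : HasDerivAt pdf (-(x * pdf x)) x := by
  have hexp : HasDerivAt (fun u : ℝ => -u ^ 2 / 2) (-x) x :=
    ((hasDerivAt_pow 2 x).fun_neg.div_const 2).congr_deriv (by ring)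
  exact (hexp.exp.const_mul _).congr_deriv (by simp only [pdf]; ring)

lemma tendsto_pdf_atTop : Tendsto pdf atTop (𝓝 0) := by
  have : Tendsto (fun x : ℝ => -x ^ 2 / 2) atTop atBot :=
    (tendsto_neg_atTop_atBot.comp (tendsto_pow_atTop two_ne_zero)).atBot_div_const two_pos
  have := (tendsto_exp_atBot.comp this).const_mul (1 / √(2 * π))
  rwa [mul_zero] at this

lemma hasDerivAt_cdf (x : ℝ) : HasDerivAt cdf (pdf x) x := by
  have hcdf : cdf = fun y => cdf 0 + ∫ t in (0 : ℝ)..y, pdf t := by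
    ext y
    rw [← intervalIntegral.integral_Iic_sub_Iic integrable_pdf.integrableOn
      integrable_pdf.integrableOn]
    simp [cdf]
  rw [hcdf]
  exact (intervalIntegral.integral_hasDerivAt_right integrable_pdf.intervalIntegrable
    (continuous_pdf.stronglyMeasurableAtFilter _ _) continuous_pdf.continuousAt).const_add _

lemma continuous_cdf : Continuous cdf :=
  continuous_iff_continuousAt.2 fun x => (hasDerivAt_cdf x).continuousAt

lemma strictMono_cdf : StrictMono cdf :=
  strictMono_of_hasDerivAt_pos hasDerivAt_cdf pdf_pos

lemma one_sub_cdf (x : ℝ) : 1 - cdf x = ∫ t in Ioi x, pdf t := by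
  rw [← integral_pdf, ← intervalIntegral.integral_Iic_add_Ioi integrable_pdf.integrableOn
    integrable_pdf.integrableOn, cdf, add_sub_cancel_left]

lemma cdf_neg (x : ℝ) : cdf (-x) = 1 - cdf x := by
  rw [one_sub_cdf, cdf, ← integral_comp_neg_Ioi]
  simp only [pdf_neg]

lemma cdf_pos (x : ℝ) : 0 < cdf x :=
  (integral_pos_iff_support_of_nonneg (fun t => (pdf_pos t).le) integrable_pdf.integrableOn).2
    (by simp [Function.support_eq_univ fun t => (pdf_pos t).ne'])

lemma integral_Ioi_mul_pdf {x : ℝ} (hx : 0 ≤ x) :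
    IntegrableOn (fun u => u * pdf u) (Ioi x) ∧ ∫ u in Ioi x, u * pdf u = pdf x := by
  have hderiv (u : ℝ) : HasDerivAt (fun u => -pdf u) (u * pdf u) u := by
    simpa using (hasDerivAt_pdf u).fun_neg
  have hnonneg (u : ℝ) (hu : u ∈ Ioi x) : 0 ≤ u * pdf u :=
    mul_nonneg (hx.trans hu.out.le) (pdf_pos u).le
  have hlim : Tendsto (fun u => -pdf u) atTop (𝓝 (-0)) := tendsto_pdf_atTop.neg
  refine ⟨integrableOn_Ioi_deriv_of_nonneg' (fun u _ => hderiv u) hnonneg hlim, ?_⟩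
  rw [integral_Ioi_of_hasDerivAt_of_nonneg' (fun u _ => hderiv u) hnonneg hlim]
  ring

lemma mul_one_sub_cdf_le {x : ℝ} (hx : 0 ≤ x) : x * (1 - cdf x) ≤ pdf x := by
  obtain ⟨hint, hintegral⟩ := integral_Ioi_mul_pdf hx
  rw [one_sub_cdf, ← integral_const_mul, ← hintegral]
  exact setIntegral_mono_on (integrable_pdf.integrableOn.const_mul x) hint measurableSet_Ioi
    fun u hu => mul_le_mul_of_nonneg_right hu.out.le (pdf_pos u).le

lemma cdf_lt_one (x : ℝ) : cdf x < 1 := by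
  linarith [cdf_neg x, cdf_pos (-x)]

lemma tendsto_mul_one_sub_cdf_atTop : Tendsto (fun x => x * (1 - cdf x)) atTop (𝓝 0) :=
  tendsto_of_tendsto_of_tendsto_of_le_of_le' tendsto_const_nhds tendsto_pdf_atTop
    ((eventually_ge_atTop 0).mono fun x hx => mul_nonneg hx (by linarith [cdf_lt_one x]))
    ((eventually_ge_atTop 0).mono fun x hx => mul_one_sub_cdf_le hx)

lemma tendsto_cdf_atTop : Tendsto cdf atTop (𝓝 1) := by
  have htail : Tendsto (fun x => 1 - cdf x) atTop (𝓝 0) :=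
    tendsto_of_tendsto_of_tendsto_of_le_of_le' tendsto_const_nhds tendsto_pdf_atTop
      (Eventually.of_forall fun x => by linarith [cdf_lt_one x])
      ((eventually_ge_atTop 1).mono fun x hx => by
        nlinarith [mul_one_sub_cdf_le (zero_le_one.trans hx), cdf_lt_one x])
  simpa using htail.const_sub 1

lemma tendsto_cdf_atBot : Tendsto cdf atBot (𝓝 0) := by
  have := (tendsto_cdf_atTop.comp tendsto_neg_atBot_atTop).const_sub 1
  simpa [Function.comp_def, cdf_neg] using this

lemma range_cdf : range cdf = Ioo 0 1 := by
  refine (range_subset_iff.2 fun x => mem_Ioo.2 ⟨cdf_pos x, cdf_lt_one x⟩).antisymm ?_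
  rw [← image_univ]
  exact isPreconnected_univ.intermediate_value_Ioo (by simp) (by simp) continuous_cdf.continuousOn
    tendsto_cdf_atBot tendsto_cdf_atTop

lemma hasDerivAt_mul_one_sub_cdf_sub_pdf (x : ℝ) :
    HasDerivAt (fun x => x * (1 - cdf x) - pdf x) (1 - cdf x) x := by
  refine (((hasDerivAt_id' x).fun_mul ((hasDerivAt_const x 1).fun_sub (hasDerivAt_cdf x))).fun_sub
    (hasDerivAt_pdf x)).congr_deriv ?_
  ring

lemma integral_Ioi_one_sub_cdf (y : ℝ) :
    IntegrableOn (fun x => 1 - cdf x) (Ioi y) ∧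
      ∫ x in Ioi y, (1 - cdf x) = pdf y - y * (1 - cdf y) := by
  have hnonneg (x : ℝ) (_ : x ∈ Ioi y) : 0 ≤ 1 - cdf x := by linarith [cdf_lt_one x]
  have hlim : Tendsto (fun x => x * (1 - cdf x) - pdf x) atTop (𝓝 (0 - 0)) :=
    tendsto_mul_one_sub_cdf_atTop.sub tendsto_pdf_atTop
  refine ⟨integrableOn_Ioi_deriv_of_nonneg' (fun x _ => hasDerivAt_mul_one_sub_cdf_sub_pdf x)
    hnonneg hlim, ?_⟩
  rw [integral_Ioi_of_hasDerivAt_of_nonneg' (fun x _ => hasDerivAt_mul_one_sub_cdf_sub_pdf x)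
    hnonneg hlim]
  ring

lemma integral_Iic_cdf (y : ℝ) :
    IntegrableOn cdf (Iic y) ∧ ∫ x in Iic y, cdf x = y * cdf y + pdf y := by
  have hreflect : (fun x => 1 - cdf (-x)) = cdf := by
    ext x; rw [cdf_neg, sub_sub_cancel]
  obtain ⟨hint, hintegral⟩ := integral_Ioi_one_sub_cdf (-y)
  refine ⟨hreflect ▸ integrableOn_Iic_comp_neg hint, ?_⟩
  calc ∫ x in Iic y, cdf x = ∫ x in Iic y, (1 - cdf (-x)) := by rw [hreflect]
    _ = ∫ x in Ioi (-y), (1 - cdf x) := integral_comp_neg_Iic y fun x => 1 - cdf x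
    _ = y * cdf y + pdf y := by rw [hintegral, pdf_neg, cdf_neg]; ring

lemma integral_min_cdf_sub_mul (y : ℝ) :
    ∫ x, (min (cdf y) (cdf x) - cdf y * cdf x) = pdf y := by
  obtain ⟨hIic, hIic_eq⟩ := integral_Iic_cdf y
  obtain ⟨hIoi, hIoi_eq⟩ := integral_Ioi_one_sub_cdf y
  rw [integral_min_sub_mul_eq_of_monotone strictMono_cdf.monotone hIic hIoi, hIic_eq, hIoi_eq]
  ring

lemma integral_zero_one_eq_integral_pdf_mul_comp_cdf (g : ℝ → ℝ) :
    ∫ s in (0 : ℝ)..1, g s = ∫ x, pdf x * g (cdf x) := by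
  rw [intervalIntegral.integral_of_le zero_le_one, integral_Ioc_eq_integral_Ioo, ← range_cdf,
    ← image_univ, integral_image_eq_integral_abs_deriv_smul MeasurableSet.univ
      (fun x _ => (hasDerivAt_cdf x).hasDerivWithinAt) strictMono_cdf.injective.injOn,
    setIntegral_univ]
  simp_rw [abs_of_pos (pdf_pos _), smul_eq_mul]

end StdNormal

/-- Example 5: with `ϕ` the standard normal density, `Φ` the standard normal CDF
and `Φ⁻¹` its inverse on `(0,1)`, the function `φ(t) = 1/ϕ(Φ⁻¹(t))` satisfies
`ψ(t) = ∫₀¹ (min(t,s) − ts) φ(s) ds = ϕ(Φ⁻¹(t))` and `q = ∫₀¹ ψ φ = 1`. -/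
theorem normal_quantile_example
    (gphi gPhi Phinv : ℝ → ℝ)
    (hphi : ∀ x, gphi x = (1 / Real.sqrt (2 * π)) * Real.exp (-x ^ 2 / 2))
    (hPhi : ∀ x, gPhi x = ∫ t in Set.Iic x, gphi t)
    (hinv : ∀ t ∈ Set.Ioo (0:ℝ) 1, gPhi (Phinv t) = t) :
    (∀ t ∈ Set.Ioo (0:ℝ) 1,
      (∫ s in (0:ℝ)..1, (min t s - t * s) * (1 / gphi (Phinv s)))
        = gphi (Phinv t)) ∧
    (∫ t in (0:ℝ)..1, gphi (Phinv t) * (1 / gphi (Phinv t))) = 1 := by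
  obtain rfl : gphi = StdNormal.pdf := funext hphi
  obtain rfl : gPhi = StdNormal.cdf := funext hPhi
  have hinv_cdf (x : ℝ) : Phinv (StdNormal.cdf x) = x :=
    StdNormal.strictMono_cdf.injective
      (hinv _ ⟨StdNormal.cdf_pos x, StdNormal.cdf_lt_one x⟩)
  refine ⟨fun t ht => ?_, by simp [(StdNormal.pdf_pos _).ne']⟩
  obtain ⟨y, rfl⟩ : t ∈ range StdNormal.cdf := StdNormal.range_cdf ▸ ht
  rw [StdNormal.integral_zero_one_eq_integral_pdf_mul_comp_cdf, hinv_cdf,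
    ← StdNormal.integral_min_cdf_sub_mul]
  refine integral_congr_ae (Eventually.of_forall fun x => ?_)
  simp only [hinv_cdf]
  field_simp [(StdNormal.pdf_pos x).ne']
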